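/- Let a, b > 0 with a > 1 or b > 1, and let Λ = {(m₁, m₂, a n₁, b n₂) : m₁, m₂, n₁, n₂ ∈ ℤ} ⊂ ℝ² × ℝ². Then the Gabor system (g₂, Λ) is incomplete in L²(ℝ²): there exists a nonzero F ∈ L²(ℝ²) with ⟨F, π(λ)g₂⟩ = 0 for all λ ∈ Λ. -/

import Mathlib

open MeasureTheory Complex

noncomputable section

/-- Euclidean dot product on `ι → ℝ`. -/
def dotR {ι : Type*} [Fintype ι] (x y : ι → ℝ) : ℝ := ∑ i, x i * y i

/-- Time-frequency shift `π(x,ω) g (t) = e^{2πi⟨ω,t⟩} g(t-x)`. -/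
def tfShift {ι : Type*} [Fintype ι] (x ω : ι → ℝ) (g : (ι → ℝ) → ℂ) : (ι → ℝ) → ℂ :=
  fun t => Complex.exp (2 * Real.pi * Complex.I * (dotR ω t : ℝ)) * g (t - x)

/-- The Gabor coefficient `⟨f, π(x,ω) g⟩` in `L²`; equivalently the
short-time Fourier transform `V_g f (x, ω)`. -/
def gaborCoef {ι : Type*} [Fintype ι] (f g : (ι → ℝ) → ℂ) (x ω : ι → ℝ) : ℂ :=
  ∫ t : ι → ℝ, f t * (starRingEnd ℂ) (tfShift x ω g t)

/-- `(g, Λ)` satisfies the frame inequalities for `L²(ℝ^ι)` with bounds `A`, `B`. -/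
def IsGaborFrameWith {ι : Type*} [Fintype ι] (g : (ι → ℝ) → ℂ)
    (Λ : Set ((ι → ℝ) × (ι → ℝ))) (A B : ℝ) : Prop :=
  ∀ f : (ι → ℝ) → ℂ, MemLp f 2 volume →
    A * (∫ t, ‖f t‖ ^ 2) ≤
        (∑' lam : Λ, ‖gaborCoef f g (lam : ((ι → ℝ) × (ι → ℝ))).1 (lam : ((ι → ℝ) × (ι → ℝ))).2‖ ^ 2) ∧
    (∑' lam : Λ, ‖gaborCoef f g (lam : ((ι → ℝ) × (ι → ℝ))).1 (lam : ((ι → ℝ) × (ι → ℝ))).2‖ ^ 2) ≤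
        B * (∫ t, ‖f t‖ ^ 2)

/-- `(g, Λ)` is a frame for `L²(ℝ^ι)`. -/
def GaborFrame {ι : Type*} [Fintype ι] (g : (ι → ℝ) → ℂ)
    (Λ : Set ((ι → ℝ) × (ι → ℝ))) : Prop :=
  ∃ A B : ℝ, 0 < A ∧ 0 < B ∧ IsGaborFrameWith g Λ A B

/-- `(g, Λ)` is complete in `L²(ℝ^ι)`. -/
def GaborComplete {ι : Type*} [Fintype ι] (g : (ι → ℝ) → ℂ)
    (Λ : Set ((ι → ℝ) × (ι → ℝ))) : Prop :=
  ∀ f : (ι → ℝ) → ℂ, MemLp f 2 volume →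
    (∀ lam ∈ Λ, gaborCoef f g lam.1 lam.2 = 0) → f =ᵐ[volume] 0

/-- The normalized Gaussian `g_d(t) = 2^{d/4} e^{-π ‖t‖²}` in dimension `d = card ι`. -/
def gaussian (ι : Type*) [Fintype ι] : (ι → ℝ) → ℂ :=
  fun t => (((2 : ℝ) ^ ((Fintype.card ι : ℝ) / 4) * Real.exp (-(Real.pi * dotR t t)) : ℝ) : ℂ)

/-!
By tensoring, the problem is one-dimensional: against `g₂ = g₁ ⊗ g₁` the Gabor coefficients of
`F = f ⊗ g₁` factor, so it suffices to find `f ∈ L²(ℝ)` with `⟨f, π(m, an) g₁⟩ = 0` for all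
`m, n ∈ ℤ` when `a > 1`. Take `f(t) = w(⌊at⌋) e^{πt²}` with `w(k) = (-1)^k e^{-π(k² + k)/a}`;
since `k² + k ≥ (at)² - a|t|`, we get `|f(t)| ≤ e^{π|t| - π(a - 1)t²}`, so `f ∈ L²` as `a > 1`.
Against `e^{2πiant} g₁(t - m)` the factor `e^{πt²}` turns the Gaussian into `e^{2πmt - πm²}`, and
`e^{-2πiant}` is `1/a`-periodic, so cutting `ℝ` into the cells `⌊at⌋ = k` makes the coefficient a
multiple of `∑ₖ w(k) e^{2πmk/a}`. This sum vanishes: the reflection `k ↦ 2m - 1 - k` preserves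
the Gaussian factor `e^{-π(k² + k - 2mk)/a}` and flips the sign `(-1)^k`.
-/

open scoped Real ComplexConjugate

theorem tsum_eq_zero_of_apply_sub_eq_neg {E : Type*} [AddCommGroup E] [TopologicalSpace E]
    [IsTopologicalAddGroup E] [T2Space E] [IsAddTorsionFree E] {f : ℤ → E} (j : ℤ)
    (hf : ∀ k, f (j - k) = -f k) : ∑' k, f k = 0 := by
  refine self_eq_neg.mp ?_
  calc ∑' k, f k = ∑' k, f (j - k) := ((Equiv.subLeft j).tsum_eq f).symm
    _ = -∑' k, f k := by rw [tsum_congr hf, tsum_neg]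

theorem hasSum_setIntegral_fiber {X ι E : Type*} [MeasurableSpace X] [NormedAddCommGroup E]
    [NormedSpace ℝ E] [Countable ι] [MeasurableSpace ι] [MeasurableSingletonClass ι]
    {μ : Measure X} {q : X → ι} (hq : Measurable q) {f : X → E} (hf : Integrable f μ) :
    HasSum (fun i => ∫ x in q ⁻¹' {i}, f x ∂μ) (∫ x, f x ∂μ) := by
  have hcover : ⋃ i, q ⁻¹' {i} = Set.univ := by
    rw [← Set.preimage_iUnion, Set.iUnion_of_singleton, Set.preimage_univ]
  simpa only [hcover, Measure.restrict_univ] using hasSum_integral_iUnion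
    (fun i => hq (measurableSet_singleton i)) (pairwise_disjoint_fiber q) (hcover ▸ hf.integrableOn)

theorem hasSum_integral_mul_floor {a : ℝ} (ha : a ≠ 0) {W c : ℤ → ℂ} {ψ : ℝ → ℂ}
    (hψ : ∀ (k : ℤ) s, ψ (s + k / a) = c k * ψ s)
    (hint : Integrable fun t => W ⌊a * t⌋ * ψ t) :
    HasSum (fun k => W k * c k * ∫ s in {s | ⌊a * s⌋ = 0}, ψ s) (∫ t, W ⌊a * t⌋ * ψ t) := by
  have hq : Measurable fun t : ℝ => ⌊a * t⌋ := (measurable_const_mul a).floor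
  refine (hasSum_setIntegral_fiber hq hint).congr_fun fun k => Eq.symm ?_
  have hfiber : (· + k / a) ⁻¹' ((fun t => ⌊a * t⌋) ⁻¹' {k}) = {s | ⌊a * s⌋ = 0} := by
    ext s
    simp [mul_add, mul_div_cancel₀ _ ha, Int.floor_add_intCast]
  calc ∫ t in (fun t => ⌊a * t⌋) ⁻¹' {k}, W ⌊a * t⌋ * ψ t
      = ∫ t in (fun t => ⌊a * t⌋) ⁻¹' {k}, W k * ψ t :=
        setIntegral_congr_fun (hq (measurableSet_singleton k))
          fun t (ht : ⌊a * t⌋ = k) => by rw [ht]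
    _ = W k * ∫ s in {s | ⌊a * s⌋ = 0}, ψ (s + k / a) := by
        rw [integral_const_mul, ← hfiber,
          (measurePreserving_add_right volume _).setIntegral_preimage_emb
            (measurableEmbedding_addRight _)]
    _ = W k * c k * ∫ s in {s | ⌊a * s⌋ = 0}, ψ s := by
        simp_rw [hψ, integral_const_mul, mul_assoc]

theorem sq_sub_abs_le_floor_mul_floor_add_one (x : ℝ) : x ^ 2 - |x| ≤ ⌊x⌋ * (⌊x⌋ + 1) := by
  have hle : (⌊x⌋ : ℝ) ≤ x := Int.floor_le x
  have hlt : x < ⌊x⌋ + 1 := Int.lt_floor_add_one x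
  rcases le_or_gt 0 ⌊x⌋ with hk | hk
  · have hk : (0 : ℝ) ≤ ⌊x⌋ := by exact_mod_cast hk
    rw [abs_of_nonneg (hk.trans hle)]
    nlinarith [mul_nonneg (by linarith : (0 : ℝ) ≤ ⌊x⌋ + 1 - x) (by linarith : (0 : ℝ) ≤ ⌊x⌋ + x)]
  · have hk : (⌊x⌋ : ℝ) ≤ -1 := by exact_mod_cast (by omega : ⌊x⌋ ≤ -1)
    rw [abs_of_neg (by linarith)]
    nlinarith [mul_nonneg_of_nonpos_of_nonpos (by linarith : (⌊x⌋ : ℝ) - x ≤ 0)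
      (by linarith : (⌊x⌋ : ℝ) + x + 1 ≤ 0)]

theorem integrable_exp_mul_abs_sub_mul_sq (c : ℝ) {d : ℝ} (hd : 0 < d) :
    Integrable fun t : ℝ => Real.exp (c * |t| - d * t ^ 2) := by
  refine ((integrable_exp_neg_mul_sq (half_pos hd)).const_mul (Real.exp (c ^ 2 / (2 * d)))).mono'
    (by fun_prop) (ae_of_all _ fun t => ?_)
  rw [Real.norm_of_nonneg (Real.exp_pos _).le, ← Real.exp_add, Real.exp_le_exp]
  have hsq : c ^ 2 / (2 * d) + -(d / 2) * t ^ 2 - (c * |t| - d * t ^ 2)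
      = (c - d * |t|) ^ 2 / (2 * d) := by
    field_simp
    rw [← sq_abs t]
    ring
  nlinarith [div_nonneg (sq_nonneg (c - d * |t|)) (by positivity : (0 : ℝ) ≤ 2 * d)]

theorem memLp_two_exp_mul_abs_sub_mul_sq (c : ℝ) {d : ℝ} (hd : 0 < d) :
    MemLp (fun t : ℝ => Real.exp (c * |t| - d * t ^ 2)) 2 := by
  rw [memLp_two_iff_integrable_sq_norm (by fun_prop)]
  refine (integrable_exp_mul_abs_sub_mul_sq (2 * c) (by positivity : 0 < 2 * d)).congr
    (ae_of_all _ fun t => ?_)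
  dsimp only
  rw [Real.norm_of_nonneg (Real.exp_pos _).le, ← Real.exp_nat_mul]
  ring_nf

section Tensor

variable {ι : Type*} [Fintype ι]

def gaborCoef₁ (f g : ℝ → ℂ) (x ω : ℝ) : ℂ :=
  ∫ s, f s * conj (cexp (2 * π * I * ((ω * s : ℝ) : ℂ)) * g (s - x))

def gaussian₁ (s : ℝ) : ℂ := ((2 : ℝ) ^ ((1 : ℝ) / 4) * Real.exp (-(π * (s * s))) : ℝ)

theorem gaussian_eq_prod : gaussian ι = fun t => ∏ i, gaussian₁ (t i) := by
  ext t
  simp only [gaussian, gaussian₁, dotR, ← ofReal_prod, Finset.prod_mul_distrib, Finset.mul_sum,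
    ← Finset.sum_neg_distrib, Real.exp_sum, Finset.prod_const, Finset.card_univ]
  rw [← Real.rpow_natCast, ← Real.rpow_mul (by norm_num)]
  ring_nf

theorem tfShift_prod (f : ι → ℝ → ℂ) (x ω t : ι → ℝ) :
    tfShift x ω (fun t => ∏ i, f i (t i)) t
      = ∏ i, cexp (2 * π * I * ((ω i * t i : ℝ) : ℂ)) * f i (t i - x i) := by
  simp only [tfShift, dotR, ofReal_sum, Finset.mul_sum, Complex.exp_sum, Finset.prod_mul_distrib,
    Pi.sub_apply]

theorem gaborCoef_prod (f g : ι → ℝ → ℂ) (x ω : ι → ℝ) :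
    gaborCoef (fun t => ∏ i, f i (t i)) (fun t => ∏ i, g i (t i)) x ω
      = ∏ i, gaborCoef₁ (f i) (g i) (x i) (ω i) := by
  simp only [gaborCoef, gaborCoef₁, tfShift_prod, map_prod, ← Finset.prod_mul_distrib]
  exact integral_fintype_prod_volume_eq_prod
    (fun i s => f i s * conj (cexp (2 * π * I * ((ω i * s : ℝ) : ℂ)) * g i (s - x i)))

theorem memLp_two_fintype_prod {E : Type*} [MeasurableSpace E] {μ : ι → Measure E}
    [∀ i, SigmaFinite (μ i)] {f : ι → E → ℂ} (hf : ∀ i, MemLp (f i) 2 (μ i)) :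
    MemLp (fun t => ∏ i, f i (t i)) 2 (Measure.pi μ) := by
  have hmeas : AEStronglyMeasurable (fun t => ∏ i, f i (t i)) (Measure.pi μ) :=
    Finset.aestronglyMeasurable_fun_prod Finset.univ fun i _ =>
      (hf i).1.comp_quasiMeasurePreserving (Measure.quasiMeasurePreserving_eval μ i)
  rw [memLp_two_iff_integrable_sq_norm hmeas]
  simpa only [norm_prod, Finset.prod_pow] using
    Integrable.fintype_prod fun i => (memLp_two_iff_integrable_sq_norm (hf i).1).1 (hf i)

end Tensor

theorem integrable_gaborCoef₁_integrand {f g : ℝ → ℂ} (hf : MemLp f 2) (hg : MemLp g 2)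
    (x ω : ℝ) :
    Integrable fun s => f s * conj (cexp (2 * π * I * ((ω * s : ℝ) : ℂ)) * g (s - x)) := by
  have hgx : MemLp (fun s => g (s - x)) 2 :=
    hg.comp_measurePreserving (measurePreserving_sub_right _ x)
  have hchar : Continuous fun s : ℝ => cexp (2 * π * I * ((ω * s : ℝ) : ℂ)) := by fun_prop
  refine hf.integrable_mul (hgx.of_le ?_ (ae_of_all _ fun s => le_of_eq ?_))
  · exact continuous_star.comp_aestronglyMeasurable (hchar.aestronglyMeasurable.mul hgx.1)
  · simp [Complex.norm_exp]

theorem gaussian₁_ne_zero (s : ℝ) : gaussian₁ s ≠ 0 :=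
  ofReal_ne_zero.mpr (by positivity)

theorem memLp_two_gaussian₁ : MemLp gaussian₁ 2 := by
  refine (memLp_two_exp_mul_abs_sub_mul_sq 0 Real.pi_pos).of_le_mul (c := (2 : ℝ) ^ ((1 : ℝ) / 4))
    (by unfold gaussian₁; fun_prop) (ae_of_all _ fun s => le_of_eq ?_)
  rw [gaussian₁, norm_real, Real.norm_of_nonneg (by positivity),
    Real.norm_of_nonneg (Real.exp_pos _).le]
  ring_nf

def annihilatorWeight (a : ℝ) (k : ℤ) : ℂ := (-1) ^ k * Real.exp (-(π / a) * (k ^ 2 + k))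

def gaborAnnihilator (a t : ℝ) : ℂ := annihilatorWeight a ⌊a * t⌋ * Real.exp (π * t ^ 2)

theorem tsum_annihilatorWeight_mul_exp (a : ℝ) (m : ℤ) :
    ∑' k : ℤ, annihilatorWeight a k * Real.exp (2 * π * m * k / a) = 0 := by
  refine tsum_eq_zero_of_apply_sub_eq_neg (2 * m - 1) fun k => ?_
  have hsign : (-1 : ℂ) ^ (2 * m - 1 - k) = -(-1) ^ k := by
    rcases Int.even_or_odd k with hk | hk
    · rw [hk.neg_one_zpow, (by grind : Odd (2 * m - 1 - k)).neg_one_zpow]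
    · rw [hk.neg_one_zpow, (by grind : Even (2 * m - 1 - k)).neg_one_zpow, neg_neg]
  have hexp : -(π / a) * (((2 * m - 1 - k : ℤ) : ℝ) ^ 2 + ((2 * m - 1 - k : ℤ) : ℝ))
      + 2 * π * m * ((2 * m - 1 - k : ℤ) : ℝ) / a
      = -(π / a) * ((k : ℝ) ^ 2 + k) + 2 * π * m * k / a := by
    push_cast
    ring
  have hterm : ∀ j : ℤ, annihilatorWeight a j * Real.exp (2 * π * m * j / a)
      = (-1) ^ j * Real.exp (-(π / a) * ((j : ℝ) ^ 2 + j) + 2 * π * m * j / a) := fun j => by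
    rw [annihilatorWeight, Real.exp_add, ofReal_mul, mul_assoc]
  rw [hterm, hterm, hsign, hexp, neg_mul]

theorem gaborAnnihilator_ne_zero (a t : ℝ) : gaborAnnihilator a t ≠ 0 := by
  simp [gaborAnnihilator, annihilatorWeight, zpow_ne_zero _ (by norm_num : (-1 : ℂ) ≠ 0)]

theorem norm_gaborAnnihilator_le {a : ℝ} (ha : 0 < a) (t : ℝ) :
    ‖gaborAnnihilator a t‖ ≤ Real.exp (π * |t| - π * (a - 1) * t ^ 2) := by
  have hfloor := sq_sub_abs_le_floor_mul_floor_add_one (a * t)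
  rw [abs_mul, abs_of_pos ha] at hfloor
  simp only [gaborAnnihilator, annihilatorWeight, norm_mul, norm_zpow, norm_neg, norm_one,
    one_zpow, one_mul, norm_real, Real.norm_of_nonneg (Real.exp_pos _).le, ← Real.exp_add,
    Real.exp_le_exp]
  have : π / a * ((a * t) ^ 2 - a * |t|) ≤ π / a * (⌊a * t⌋ * (⌊a * t⌋ + 1)) :=
    mul_le_mul_of_nonneg_left hfloor (by positivity)
  have hlhs : π / a * ((a * t) ^ 2 - a * |t|) = π * a * t ^ 2 - π * |t| := by
    field_simp
  nlinarith

theorem measurable_gaborAnnihilator (a : ℝ) : Measurable (gaborAnnihilator a) :=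
  ((measurable_of_countable (annihilatorWeight a)).comp (measurable_const_mul a).floor).mul
    (by fun_prop : Measurable fun t : ℝ => ((Real.exp (π * t ^ 2) : ℝ) : ℂ))

theorem memLp_two_gaborAnnihilator {a : ℝ} (ha : 1 < a) : MemLp (gaborAnnihilator a) 2 :=
  (memLp_two_exp_mul_abs_sub_mul_sq π (by nlinarith [Real.pi_pos])).of_le
    (measurable_gaborAnnihilator a).aestronglyMeasurable (ae_of_all _ fun t =>
      (norm_gaborAnnihilator_le (by linarith) t).trans (Real.le_norm_self _))

theorem gaborCoef₁_gaborAnnihilator_gaussian₁ {a : ℝ} (ha : 1 < a) (m n : ℤ) :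
    gaborCoef₁ (gaborAnnihilator a) gaussian₁ m (a * n) = 0 := by
  have ha0 : a ≠ 0 := by positivity
  have haC : (a : ℂ) ≠ 0 := ofReal_ne_zero.mpr ha0
  set e : ℝ → ℂ := fun t => ((2 * π * m * t - π * m ^ 2 : ℝ) : ℂ) - 2 * π * I * (a * n * t : ℝ)
  set ψ : ℝ → ℂ := fun t => ((2 : ℝ) ^ ((1 : ℝ) / 4) : ℝ) * cexp (e t)
  have hψ : ∀ (k : ℤ) s, ψ (s + k / a) = Real.exp (2 * π * m * k / a) * ψ s := by
    intro k s
    have he : e (s + k / a) = (2 * π * m * k / a : ℝ) + e s + (-(n * k) : ℤ) * (2 * π * I) := by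
      simp only [e]
      push_cast
      field_simp
      ring
    simp only [ψ, he, Complex.exp_add, Complex.exp_int_mul_two_pi_mul_I, ofReal_exp]
    ring
  have hprod : ∀ t, gaborAnnihilator a t
      * conj (cexp (2 * π * I * ((a * n * t : ℝ) : ℂ)) * gaussian₁ (t - m))
      = annihilatorWeight a ⌊a * t⌋ * ψ t := by
    intro t
    have he : e t = (π * t ^ 2 : ℝ) + (-(π * ((t - m) * (t - m))) : ℝ)
        + 2 * π * -I * (a * n * t : ℝ) := by
      simp only [e]
      push_cast
      ring
    simp only [gaborAnnihilator, gaussian₁, ψ, map_mul, ← exp_conj, conj_ofReal, conj_I, map_ofNat]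
    rw [he, Complex.exp_add, Complex.exp_add, ← ofReal_exp, ← ofReal_exp, ofReal_mul (2 ^ _)]
    ring
  have hint : Integrable fun t => annihilatorWeight a ⌊a * t⌋ * ψ t := by
    simpa only [hprod] using integrable_gaborCoef₁_integrand (memLp_two_gaborAnnihilator ha)
      memLp_two_gaussian₁ m (a * n)
  rw [gaborCoef₁, funext hprod, ← (hasSum_integral_mul_floor ha0 hψ hint).tsum_eq, tsum_mul_right,
    tsum_annihilatorWeight_mul_exp, zero_mul]

theorem exists_gaborCoef_gaussian_eq_zero {ι : Type*} [Fintype ι] [DecidableEq ι] (i : ι)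
    {a : ℝ} (ha : 1 < a) :
    ∃ F : (ι → ℝ) → ℂ, MemLp F 2 volume ∧ ¬ (F =ᵐ[volume] 0) ∧
      ∀ x ω : ι → ℝ, (∃ m n : ℤ, x i = m ∧ ω i = a * n) → gaborCoef F (gaussian ι) x ω = 0 := by
  set f : ι → ℝ → ℂ := Function.update (fun _ => gaussian₁) i (gaborAnnihilator a)
  have hf2 : ∀ j, MemLp (f j) 2 :=
    (Function.forall_update_iff _ fun _ (g : ℝ → ℂ) => MemLp g 2 volume).mpr
      ⟨memLp_two_gaborAnnihilator ha, fun _ _ => memLp_two_gaussian₁⟩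
  have hf0 : ∀ j s, f j s ≠ 0 :=
    (Function.forall_update_iff _ fun _ (g : ℝ → ℂ) => ∀ s, g s ≠ 0).mpr
      ⟨gaborAnnihilator_ne_zero a, fun _ _ => gaussian₁_ne_zero⟩
  refine ⟨fun t => ∏ j, f j (t j), memLp_two_fintype_prod hf2, fun h => ?_, ?_⟩
  · obtain ⟨t, ht⟩ := h.exists
    exact Finset.prod_ne_zero_iff.mpr (fun j _ => hf0 j (t j)) ht
  · rintro x ω ⟨m, n, hx, hω⟩
    rw [gaussian_eq_prod, gaborCoef_prod]
    refine Finset.prod_eq_zero (Finset.mem_univ i) ?_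
    rw [hx, hω, show f i = gaborAnnihilator a from Function.update_self ..]
    exact gaborCoef₁_gaborAnnihilator_gaussian₁ ha m n

theorem gaussian_incomplete_separable_lattice_general (a b : ℝ)
    (hab : 1 < a ∨ 1 < b) :
    ∃ F : (Fin 2 → ℝ) → ℂ, MemLp F 2 volume ∧ ¬ (F =ᵐ[volume] 0) ∧
      ∀ lam ∈ {p : (Fin 2 → ℝ) × (Fin 2 → ℝ) | ∃ m₁ m₂ n₁ n₂ : ℤ,
          p = (![(m₁ : ℝ), (m₂ : ℝ)], ![a * (n₁ : ℝ), b * (n₂ : ℝ)])},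
        gaborCoef F (gaussian (Fin 2)) lam.1 lam.2 = 0 := by
  rcases hab with ha | hb
  · obtain ⟨F, hF2, hF0, hF⟩ := exists_gaborCoef_gaussian_eq_zero (0 : Fin 2) ha
    refine ⟨F, hF2, hF0, ?_⟩
    rintro _ ⟨m₁, m₂, n₁, n₂, rfl⟩
    exact hF _ _ ⟨m₁, n₁, rfl, rfl⟩
  · obtain ⟨F, hF2, hF0, hF⟩ := exists_gaborCoef_gaussian_eq_zero (1 : Fin 2) hb
    refine ⟨F, hF2, hF0, ?_⟩
    rintro _ ⟨m₁, m₂, n₁, n₂, rfl⟩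
    exact hF _ _ ⟨m₂, n₂, rfl, rfl⟩

/-- if `a > 1` or `b > 1`, the Gaussian Gabor system over
`ℤ² × (aℤ × bℤ)` is incomplete in `L²(ℝ²)`. -/
theorem gaussian_incomplete_separable_lattice (a b : ℝ)
    (ha0 : 0 < a) (hb0 : 0 < b) (hab : 1 < a ∨ 1 < b) :
    ∃ F : (Fin 2 → ℝ) → ℂ, MemLp F 2 volume ∧ ¬ (F =ᵐ[volume] 0) ∧
      ∀ lam ∈ {p : (Fin 2 → ℝ) × (Fin 2 → ℝ) | ∃ m₁ m₂ n₁ n₂ : ℤ,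
          p = (![(m₁ : ℝ), (m₂ : ℝ)], ![a * (n₁ : ℝ), b * (n₂ : ℝ)])},
        gaborCoef F (gaussian (Fin 2)) lam.1 lam.2 = 0 :=
  gaussian_incomplete_separable_lattice_general a b hab
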